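/- arXiv:1012.3024 — 3 statements merged into one kernel-verified Lean document; each statement's English description precedes it below -/
import Mathlib

section
/- For a compacted binary trie, E = I + T, where E is the sum of the lengths of the external extents, I is the sum of the lengths of the internal extents, and T is the trie measure, defined as the sum over all nodes α of (|c_α| + 1), minus 1, where c_α is the compacted path labelling node α. -/
/-- A compacted binary trie: each node is labelled with a compacted path (a binary string). -/
inductive CTrie where
  | leaf : List Bool → CTrie
  | node : List Bool → CTrie → CTrie → CTrie

/-- Number of external nodes (leaves). -/
def CTrie.leaves : CTrie → ℕ
  | .leaf _ => 1
  | .node _ l r => l.leaves + r.leaves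

/-- Sum of the lengths of the external extents. -/
def CTrie.E : CTrie → ℕ
  | .leaf c => c.length
  | .node c l r => l.E + r.E + (c.length + 1) * (l.leaves + r.leaves)

/-- Sum of the lengths of the internal extents. -/
def CTrie.I : CTrie → ℕ
  | .leaf _ => 0
  | .node c l r => l.I + r.I + (c.length + 1) * ((l.leaves - 1) + (r.leaves - 1)) + c.length

/-- Sum over all nodes of `|c_α| + 1`. -/
def CTrie.sumC : CTrie → ℕ
  | .leaf c => c.length + 1
  | .node c l r => l.sumC + r.sumC + (c.length + 1)

/-- The trie measure `T`. -/
def CTrie.T (t : CTrie) : ℕ := t.sumC - 1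

lemma CTrie.leaves_pos (t : CTrie) : 1 ≤ t.leaves := by
  induction t with
  | leaf c => simp [leaves]
  | node c l r hl hr => simp [leaves]; omega

lemma CTrie.key (t : CTrie) : t.E + 1 = t.I + t.sumC := by
  induction t with
  | leaf c => simp [E, I, sumC]
  | node c l r hl hr =>
    have pl := l.leaves_pos
    have pr := r.leaves_pos
    simp only [E, I, sumC]
    have : (c.length + 1) * (l.leaves + r.leaves)
        = (c.length + 1) * ((l.leaves - 1) + (r.leaves - 1)) + 2 * (c.length + 1) := by
      have : l.leaves + r.leaves = ((l.leaves - 1) + (r.leaves - 1)) + 2 := by omega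
      rw [this, Nat.mul_add]
      ring
    omega

theorem E_eq_I_add_T (t : CTrie) : t.E = t.I + t.T := by
  have h := t.key
  have h2 : 1 ≤ t.sumC := by
    induction t with
    | leaf c => simp [CTrie.sumC]
    | node c l r hl hr => simp [CTrie.sumC]; omega
  unfold CTrie.T
  omega
end

section
/- Let S be a prefix-free set of n ≥ 2 binary strings with total length E = nℓ, and consider its compacted binary trie with sum of internal extent lengths I. Then E/n ≥ I/(n-1) + 3/2 - 1/n. -/
/-- E ≥ I + 2(n-1), over ℤ. -/
lemma CTrie.EI (t : CTrie) : (t.I : ℤ) + 2 * ((t.leaves : ℤ) - 1) ≤ t.E := by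
  induction t with
  | leaf c => simp [CTrie.leaves, CTrie.E, CTrie.I]
  | node c l r ihl ihr =>
    have hl := l.leaves_pos
    have hr := r.leaves_pos
    simp only [CTrie.leaves, CTrie.E, CTrie.I]
    push_cast [Nat.cast_sub hl, Nat.cast_sub hr]
    nlinarith [ihl, ihr]

/-- Key inequality: 2(n-1)E ≥ 2nI + (n-1)(3n-2). -/
lemma CTrie.key_s4 (t : CTrie) :
    2 * ((t.leaves : ℤ) - 1) * t.E ≥
      2 * (t.leaves : ℤ) * t.I + ((t.leaves : ℤ) - 1) * (3 * (t.leaves : ℤ) - 2) := by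
  induction t with
  | leaf c => simp [CTrie.leaves, CTrie.E, CTrie.I]
  | node c l r ihl ihr =>
    have hl := l.leaves_pos
    have hr := r.leaves_pos
    have hl' : (1 : ℤ) ≤ l.leaves := by exact_mod_cast hl
    have hr' : (1 : ℤ) ≤ r.leaves := by exact_mod_cast hr
    have hA1 := l.EI
    have hA2 := r.EI
    simp only [CTrie.leaves, CTrie.E, CTrie.I]
    push_cast [Nat.cast_sub hl, Nat.cast_sub hr]
    nlinarith [ihl, ihr, mul_nonneg (sub_nonneg.2 hl') (sub_nonneg.2 hr'),
      mul_le_mul_of_nonneg_left hA1 (by linarith : (0:ℤ) ≤ 2 * r.leaves),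
      mul_le_mul_of_nonneg_left hA2 (by linarith : (0:ℤ) ≤ 2 * l.leaves)]

theorem avg_internal_extent_bound (t : CTrie) (h : 2 ≤ t.leaves) :
    (t.E : ℚ) / t.leaves ≥ (t.I : ℚ) / (t.leaves - 1) + 3 / 2 - 1 / t.leaves := by
  have key_s4 := t.key_s4
  have hN : (2 : ℚ) ≤ (t.leaves : ℚ) := by exact_mod_cast h
  have hN0 : (0 : ℚ) < (t.leaves : ℚ) := by linarith
  have hN1 : (0 : ℚ) < (t.leaves : ℚ) - 1 := by linarith
  have keyQ : 2 * ((t.leaves : ℚ) - 1) * t.E ≥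
      2 * (t.leaves : ℚ) * t.I + ((t.leaves : ℚ) - 1) * (3 * (t.leaves : ℚ) - 2) := by
    exact_mod_cast key_s4
  rw [ge_iff_le, ← sub_nonneg]
  have heq : (t.E : ℚ) / t.leaves - ((t.I : ℚ) / (t.leaves - 1) + 3 / 2 - 1 / t.leaves)
      = (2 * ((t.leaves : ℚ) - 1) * t.E
          - (2 * (t.leaves : ℚ) * t.I + ((t.leaves : ℚ) - 1) * (3 * (t.leaves : ℚ) - 2)))
        / (2 * t.leaves * (t.leaves - 1)) := by
    field_simp
    ring
  rw [heq]
  apply div_nonneg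
  · linarith
  · positivity
end

section
/- For a compacted trie over an alphabet of σ symbols, E = Σ_{d=2}^{σ} (d-1)·Y(d) + T, where E = Y(0) is the sum of the lengths of the extents of the leaves, Y(d) is the sum of the lengths of the extents of nodes having exactly d children, and T is the trie measure (sum over all nodes α of (|c_α|+1), minus 1). -/
/-- A compacted trie over the alphabet `Fin σ`: each node is labelled with a string
(the compacted path), internal nodes have a list of subtries. -/
inductive CT (σ : ℕ) where
  | leaf : List (Fin σ) → CT σ
  | node : List (Fin σ) → List (CT σ) → CT σ

/-- Number of nodes with exactly `d` children. -/
def CT.countDeg {σ : ℕ} (d : ℕ) : CT σ → ℕ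
  | .leaf _ => if d = 0 then 1 else 0
  | .node _ cs => (if cs.length = d then 1 else 0)
      + (cs.attach.map (fun c => CT.countDeg d c.1)).sum
decreasing_by
  simp_wf
  have := List.sizeOf_lt_of_mem c.2
  omega

/-- `Y d` is the sum of the lengths of the extents of nodes with exactly `d` children.
It satisfies `Y d (node c cs) = Σᵢ Y d csᵢ + (|c|+1)·(Σᵢ countDeg d csᵢ) + |c|·[d = h]`,
which is the subtraction-free form of `Y(d) = Σᵢ Yᵢ(d) + (|c|+1)·n(d) - [d = h]`. -/
def CT.Y {σ : ℕ} (d : ℕ) : CT σ → ℕ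
  | .leaf c => if d = 0 then c.length else 0
  | .node c cs =>
      (cs.attach.map (fun s => CT.Y d s.1)).sum
      + (c.length + 1) * (cs.attach.map (fun s => CT.countDeg d s.1)).sum
      + (if d = cs.length then c.length else 0)
decreasing_by
  simp_wf
  have := List.sizeOf_lt_of_mem s.2
  omega

/-- Sum over all nodes of `|c_α| + 1`. -/
def CT.sumC {σ : ℕ} : CT σ → ℕ
  | .leaf c => c.length + 1
  | .node c cs => c.length + 1 + (cs.attach.map (fun s => CT.sumC s.1)).sum
decreasing_by
  simp_wf
  have := List.sizeOf_lt_of_mem s.2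
  omega

/-- The trie measure. -/
def CT.T {σ : ℕ} (t : CT σ) : ℕ := t.sumC - 1

/-- Every internal node has at least 2 and at most `σ` children. -/
inductive CT.Valid {σ : ℕ} : CT σ → Prop
  | leaf (c : List (Fin σ)) : CT.Valid (.leaf c)
  | node (c : List (Fin σ)) (cs : List (CT σ)) (h2 : 2 ≤ cs.length)
      (hσ : cs.length ≤ σ) (hc : ∀ s ∈ cs, CT.Valid s) : CT.Valid (.node c cs)

lemma sum_map_swap {α : Type*} (F : Finset ℕ) (l : List α) (f : ℕ → α → ℕ) :
    ∑ d ∈ F, (l.map fun s => f d s).sum = (l.map fun s => ∑ d ∈ F, f d s).sum := by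
  induction l with
  | nil => simp
  | cons a l ih => simp [Finset.sum_add_distrib, ih]

lemma sum_map_add' {α : Type*} (l : List α) (f g : α → ℕ) :
    (l.map fun s => f s + g s).sum = (l.map f).sum + (l.map g).sum := by
  induction l with
  | nil => simp
  | cons a l ih => simp [ih]; ring

lemma valid_node_elim {σ : ℕ} {c : List (Fin σ)} {cs : List (CT σ)}
    (h : (CT.node c cs).Valid) :
    2 ≤ cs.length ∧ cs.length ≤ σ ∧ ∀ s ∈ cs, s.Valid := by
  cases h with
  | node _ _ h2 hσ hc => exact ⟨h2, hσ, hc⟩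

theorem countDeg_zero {σ : ℕ} (t : CT σ) (hv : t.Valid) :
    t.countDeg 0 = 1 + ∑ d ∈ Finset.Icc 2 σ, (d - 1) * t.countDeg d := by
  match t, hv with
  | .leaf c, _ => simp [CT.countDeg]
  | .node c cs, hv =>
    obtain ⟨h2, hσ, hc⟩ := valid_node_elim hv
    have IH : ∀ s : {x // x ∈ cs}, CT.countDeg 0 s.1
        = 1 + ∑ d ∈ Finset.Icc 2 σ, (d - 1) * CT.countDeg d s.1 :=
      fun s => countDeg_zero s.1 (hc s.1 s.2)
    rw [CT.countDeg]
    conv_rhs => rw [Finset.sum_congr rfl (fun d _ => by rw [CT.countDeg])]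
    simp only [mul_add, Finset.sum_add_distrib, mul_ite, mul_one, mul_zero,
      Finset.sum_ite_eq, Finset.mem_Icc]
    rw [show ∀ F : Finset ℕ, (∑ d ∈ F, (d-1) * (cs.attach.map fun s => CT.countDeg d s.1).sum)
        = ∑ d ∈ F, (cs.attach.map fun s => (d-1) * CT.countDeg d s.1).sum from
      fun F => Finset.sum_congr rfl (fun d _ => by
        rw [← List.sum_map_mul_left])]
    rw [sum_map_swap]
    rw [show (cs.attach.map fun s => CT.countDeg 0 s.1)
        = cs.attach.map fun s => 1 + ∑ d ∈ Finset.Icc 2 σ, (d-1) * CT.countDeg d s.1 from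
      List.map_congr_left (fun s _ => IH s)]
    rw [sum_map_add']
    simp only [List.map_const', List.sum_replicate, smul_eq_mul, mul_one, List.length_attach]
    rw [if_neg (by omega), if_pos ⟨h2, hσ⟩]
    omega
termination_by sizeOf t
decreasing_by simp_wf; have := List.sizeOf_lt_of_mem s.2; omega

theorem Y_formula {σ : ℕ} (t : CT σ) (hv : t.Valid) :
    t.Y 0 + 1 = (∑ d ∈ Finset.Icc 2 σ, (d - 1) * t.Y d) + t.sumC := by
  match t, hv with
  | .leaf c, _ =>
    rw [CT.Y, CT.sumC, Finset.sum_eq_zero (fun d hd => by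
      rw [CT.Y, if_neg (by simp at hd; omega), mul_zero])]
    simp
  | .node c cs, hv =>
    obtain ⟨h2, hσ, hc⟩ := valid_node_elim hv
    have IH1 : ∀ s : {x // x ∈ cs}, CT.Y 0 s.1 + 1
        = (∑ d ∈ Finset.Icc 2 σ, (d - 1) * CT.Y d s.1) + CT.sumC s.1 :=
      fun s => Y_formula s.1 (hc s.1 s.2)
    have IH2 : ∀ s : {x // x ∈ cs}, CT.countDeg 0 s.1
        = 1 + ∑ d ∈ Finset.Icc 2 σ, (d - 1) * CT.countDeg d s.1 :=
      fun s => countDeg_zero s.1 (hc s.1 s.2)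
    rw [CT.Y, CT.sumC]
    conv_rhs => rw [Finset.sum_congr rfl (fun d _ => by rw [CT.Y])]
    simp only [mul_add, Finset.sum_add_distrib, mul_ite, mul_zero,
      Finset.sum_ite_eq', Finset.mem_Icc]
    rw [if_neg (by omega), if_pos ⟨h2, hσ⟩]
    rw [show (∑ x ∈ Finset.Icc 2 σ, (x-1) * (cs.attach.map fun s => CT.Y x s.1).sum)
        = ∑ x ∈ Finset.Icc 2 σ, (cs.attach.map fun s => (x-1) * CT.Y x s.1).sum from
      Finset.sum_congr rfl (fun d _ => by rw [← List.sum_map_mul_left])]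
    rw [show (∑ x ∈ Finset.Icc 2 σ, (x-1) * ((c.length + 1)
            * (cs.attach.map fun s => CT.countDeg x s.1).sum))
        = (c.length + 1) * ∑ x ∈ Finset.Icc 2 σ,
            (cs.attach.map fun s => (x-1) * CT.countDeg x s.1).sum from by
      rw [Finset.mul_sum]
      exact Finset.sum_congr rfl (fun d _ => by
        rw [List.sum_map_mul_left]; ring)]
    rw [sum_map_swap, sum_map_swap]
    have e2 : (cs.attach.map fun s => CT.countDeg 0 s.1).sum
        = cs.length + (cs.attach.map fun s =>
            ∑ d ∈ Finset.Icc 2 σ, (d-1) * CT.countDeg d s.1).sum := by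
      rw [List.map_congr_left (fun s _ => IH2 s), sum_map_add']
      simp
    have e1 : (cs.attach.map fun s => CT.Y 0 s.1).sum + cs.length
        = (cs.attach.map fun s => ∑ d ∈ Finset.Icc 2 σ, (d-1) * CT.Y d s.1).sum
          + (cs.attach.map fun s => CT.sumC s.1).sum := by
      have := congrArg List.sum (List.map_congr_left (fun s (_ : s ∈ cs.attach) => IH1 s))
      rw [sum_map_add', sum_map_add'] at this
      simpa using this
    rw [e2]
    obtain ⟨k, hk⟩ : ∃ k, cs.length = k + 2 := ⟨cs.length - 2, by omega⟩
    rw [hk] at e1 ⊢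
    have expand : (c.length + 1) * (k + 2 + (cs.attach.map fun s =>
        ∑ d ∈ Finset.Icc 2 σ, (d-1) * CT.countDeg d s.1).sum)
        = (c.length + 1) * (cs.attach.map fun s =>
        ∑ d ∈ Finset.Icc 2 σ, (d-1) * CT.countDeg d s.1).sum
          + (k + 1) * c.length + c.length + k + 2 := by ring
    rw [expand]
    rw [show k + 2 - 1 = k + 1 from rfl]
    omega
termination_by sizeOf t
decreasing_by simp_wf; have := List.sizeOf_lt_of_mem s.2; omega

lemma sumC_pos {σ : ℕ} (t : CT σ) : 1 ≤ t.sumC := by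
  cases t <;> rw [CT.sumC] <;> omega

theorem extent_formula_general {σ : ℕ} (t : CT σ) (hv : t.Valid) :
    t.Y 0 = (∑ d ∈ Finset.Icc 2 σ, (d - 1) * t.Y d) + t.T := by
  have h := Y_formula t hv
  have h1 := sumC_pos t
  unfold CT.T
  omega
end
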